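/- Let M, α1, α2, α3, β1, β2, β3 > 0, γ > −1, and N, c1, c2 ∈ ℝ. Then G_c is strictly concave on the open convex set R = {(r1, r2, p) ∈ ℝ³ : α2·exp(α3·r1) < α1, β2·exp(β3·r2) < β1, p > 0}; consequently any critical point of G_c in R is the unique global maximizer of G_c over R. -/

import Mathlib

set_option maxHeartbeats 1000000

/-- Three-term AM-GM in the form needed below. -/
lemma amgm3 {u v w k : ℝ} (hu : 0 ≤ u) (hv : 0 ≤ v) (hw : 0 ≤ w) (hk : 0 ≤ k)
    (h : u * v * w = k ^ 3) : 3 * k ≤ u + v + w := by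
  have h3 : (0:ℝ) ≤ 1/3 := by norm_num
  have hg := Real.geom_mean_le_arith_mean3_weighted h3 h3 h3 hu hv hw (by norm_num)
  have hk3 : u ^ (1/3:ℝ) * v ^ (1/3:ℝ) * w ^ (1/3:ℝ) = k := by
    rw [← Real.mul_rpow hu hv, ← Real.mul_rpow (mul_nonneg hu hv) hw, h]
    rw [← Real.rpow_natCast k 3, ← Real.rpow_mul hk]
    norm_num
  rw [hk3] at hg
  linarith

/-- Three-factor Hölder inequality for two summands. -/
lemma holder_step {X Y a b c d : ℝ} (hX : 0 < X) (hY : 0 < Y) (ha : 0 < a) (hb : 0 < b)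
    (hc : 0 < c) (hd : 0 < d) :
    (X + Y) ^ 3 / ((a + c) * (b + d)) ≤ X ^ 3 / (a * b) + Y ^ 3 / (c * d) := by
  rw [div_add_div _ _ (mul_pos ha hb).ne' (mul_pos hc hd).ne',
    div_le_div_iff₀ (mul_pos (add_pos ha hc) (add_pos hb hd))
      (mul_pos (mul_pos ha hb) (mul_pos hc hd))]
  have h1 : 3 * (X^2*Y*a*b*c*d) ≤ X^3*b*c^2*d + X^3*a*c*d^2 + Y^3*a^2*b^2 :=
    amgm3 (by positivity) (by positivity) (by positivity) (by positivity) (by ring)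
  have h2 : 3 * (X*Y^2*a*b*c*d) ≤ Y^3*a*b^2*c + Y^3*a^2*b*d + X^3*c^2*d^2 :=
    amgm3 (by positivity) (by positivity) (by positivity) (by positivity) (by ring)
  nlinarith [h1, h2]

/-- Convexity inequality for (p, u, v) ↦ p³/(u·v). -/
lemma core' {p q u1 u2 v1 v2 t s : ℝ} (hp : 0 < p) (hq : 0 < q) (hu1 : 0 < u1) (hu2 : 0 < u2)
    (hv1 : 0 < v1) (hv2 : 0 < v2) (ht : 0 < t) (hs : 0 < s) :
    (t*p + s*q) ^ 3 / ((t*u1 + s*v1) * (t*u2 + s*v2)) ≤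
      t * (p ^ 3 / (u1 * u2)) + s * (q ^ 3 / (v1 * v2)) := by
  have h := holder_step (mul_pos ht hp) (mul_pos hs hq) (mul_pos ht hu1) (mul_pos ht hu2)
    (mul_pos hs hv1) (mul_pos hs hv2)
  have e1 : (t*p) ^ 3 / ((t*u1) * (t*u2)) = t * (p ^ 3 / (u1 * u2)) := by
    field_simp
  have e2 : (s*q) ^ 3 / ((s*v1) * (s*v2)) = s * (q ^ 3 / (v1 * v2)) := by
    field_simp
  rw [e1, e2] at h
  exact h

/-- Strict convexity of the cube on positive reals. -/
lemma cube_strict {p q t s : ℝ} (hp : 0 < p) (hq : 0 < q) (ht : 0 < t) (hs : 0 < s)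
    (hts : t + s = 1) (hne : p ≠ q) : (t*p + s*q) ^ 3 < t * p ^ 3 + s * q ^ 3 := by
  have hs1 : s = 1 - t := by linarith
  subst hs1
  have hd : p - q ≠ 0 := sub_ne_zero.mpr hne
  have h2 : 0 < (p - q) ^ 2 := lt_of_le_of_ne (sq_nonneg _) (Ne.symm (pow_ne_zero 2 hd))
  have h3 : 0 < (1+t)*p + (2-t)*q := by nlinarith
  nlinarith [mul_pos (mul_pos (mul_pos ht hs) h2) h3]

/-- The strict convexity step for the composed function. -/
lemma strict_core {p q u1 u2 v1 v2 U1 U2 t s : ℝ}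
    (hp : 0 < p) (hq : 0 < q) (hu1 : 0 < u1) (hu2 : 0 < u2) (hv1 : 0 < v1) (hv2 : 0 < v2)
    (ht : 0 < t) (hs : 0 < s) (hts : t + s = 1)
    (hU1 : t*u1 + s*v1 ≤ U1) (hU2 : t*u2 + s*v2 ≤ U2)
    (hcase : (u1 = v1 ∧ u2 = v2 ∧ U1 = u1 ∧ U2 = u2 ∧ p ≠ q) ∨
      (t*u1 + s*v1 < U1 ∨ t*u2 + s*v2 < U2)) :
    (t*p + s*q) ^ 3 / (U1 * U2) < t * (p ^ 3 / (u1 * u2)) + s * (q ^ 3 / (v1 * v2)) := by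
  have hW1 : 0 < t*u1 + s*v1 := by positivity
  have hW2 : 0 < t*u2 + s*v2 := by positivity
  have hU1p : 0 < U1 := lt_of_lt_of_le hW1 hU1
  have hU2p : 0 < U2 := lt_of_lt_of_le hW2 hU2
  have hP : 0 < t*p + s*q := by positivity
  rcases hcase with ⟨h1, h2, h3, h4, hpq⟩ | hlt
  · rw [h3, h4, ← h1, ← h2]
    have hc := cube_strict hp hq ht hs hts hpq
    have hd : 0 < u1 * u2 := mul_pos hu1 hu2
    have e : t * (p ^ 3 / (u1 * u2)) + s * (q ^ 3 / (u1 * u2)) = (t*p^3 + s*q^3)/(u1*u2) := by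
      ring
    rw [e]
    exact div_lt_div_of_pos_right hc hd
  · have hlt2 : (t*u1 + s*v1) * (t*u2 + s*v2) < U1 * U2 := by
      rcases hlt with h | h
      · nlinarith
      · nlinarith
    calc (t*p + s*q) ^ 3 / (U1 * U2)
        < (t*p + s*q) ^ 3 / ((t*u1 + s*v1) * (t*u2 + s*v2)) :=
          div_lt_div_of_pos_left (by positivity) (by positivity) hlt2
      _ ≤ t * (p ^ 3 / (u1 * u2)) + s * (q ^ 3 / (v1 * v2)) :=
          core' hp hq hu1 hu2 hv1 hv2 ht hs

/-- Complements bundling profit as a function on ℝ³ (uncurried):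
G_c(r1, r2, p) = M·p·(1 − p²/(2·(1+γ)²·u1(r1)·u2(r2))) − N·c1·(1−r1) − N·c2·(1−r2),
with u1(r1) = α1 − α2·exp(α3·r1) and u2(r2) = β1 − β2·exp(β3·r2). -/
noncomputable def GcFun (M N c1 c2 α1 α2 α3 β1 β2 β3 γ : ℝ) (x : ℝ × ℝ × ℝ) : ℝ :=
  M * x.2.2 * (1 - x.2.2 ^ 2 /
      (2 * (1 + γ) ^ 2 * (α1 - α2 * Real.exp (α3 * x.1)) *
        (β1 - β2 * Real.exp (β3 * x.2.1)))) -
    N * c1 * (1 - x.1) - N * c2 * (1 - x.2.1)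

/-- G_c is strictly concave on the open convex set
R = {(r1, r2, p) : α2·exp(α3·r1) < α1, β2·exp(β3·r2) < β1, p > 0}; consequently any
critical point of G_c in R is the unique global maximizer of G_c over R. -/
theorem complements_profit_strictly_concave (M N c1 c2 α1 α2 α3 β1 β2 β3 γ : ℝ)
    (hM : 0 < M)
    (ha1 : 0 < α1) (ha2 : 0 < α2) (ha3 : 0 < α3)
    (hb1 : 0 < β1) (hb2 : 0 < β2) (hb3 : 0 < β3)
    (hγ : -1 < γ) :
    StrictConcaveOn ℝ
      {x : ℝ × ℝ × ℝ | α2 * Real.exp (α3 * x.1) < α1 ∧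
        β2 * Real.exp (β3 * x.2.1) < β1 ∧ 0 < x.2.2}
      (GcFun M N c1 c2 α1 α2 α3 β1 β2 β3 γ) ∧
    ∀ x ∈ {x : ℝ × ℝ × ℝ | α2 * Real.exp (α3 * x.1) < α1 ∧
        β2 * Real.exp (β3 * x.2.1) < β1 ∧ 0 < x.2.2},
      fderiv ℝ (GcFun M N c1 c2 α1 α2 α3 β1 β2 β3 γ) x = 0 →
      ∀ y ∈ {x : ℝ × ℝ × ℝ | α2 * Real.exp (α3 * x.1) < α1 ∧
          β2 * Real.exp (β3 * x.2.1) < β1 ∧ 0 < x.2.2},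
        y ≠ x →
        GcFun M N c1 c2 α1 α2 α3 β1 β2 β3 γ y <
        GcFun M N c1 c2 α1 α2 α3 β1 β2 β3 γ x := by
  set S : Set (ℝ × ℝ × ℝ) := {x : ℝ × ℝ × ℝ | α2 * Real.exp (α3 * x.1) < α1 ∧
        β2 * Real.exp (β3 * x.2.1) < β1 ∧ 0 < x.2.2} with hSdef
  set f : ℝ × ℝ × ℝ → ℝ := GcFun M N c1 c2 α1 α2 α3 β1 β2 β3 γ with hfdef
  have h1γ : (0:ℝ) < 1 + γ := by linarith
  have hconv : Convex ℝ S := by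
    intro x hx y hy a b ha hb hab
    obtain ⟨hx1, hx2, hx3⟩ := hx
    obtain ⟨hy1, hy2, hy3⟩ := hy
    refine ⟨?_, ?_, ?_⟩
    · show α2 * Real.exp (α3 * (a • x + b • y).1) < α1
      have hz1 : (a • x + b • y).1 = a * x.1 + b * y.1 := by simp
      rw [hz1]
      have hexp : Real.exp (α3 * (a * x.1 + b * y.1)) ≤
          a * Real.exp (α3 * x.1) + b * Real.exp (α3 * y.1) := by
        have harg : α3 * (a * x.1 + b * y.1) = a • (α3 * x.1) + b • (α3 * y.1) := by
          simp only [smul_eq_mul]; ring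
        rw [harg]
        simpa [smul_eq_mul] using
          convexOn_exp.2 (Set.mem_univ (α3 * x.1)) (Set.mem_univ (α3 * y.1)) ha hb hab
      have hIio : a • (α2 * Real.exp (α3 * x.1)) + b • (α2 * Real.exp (α3 * y.1)) ∈
          Set.Iio α1 := (convex_Iio α1) hx1 hy1 ha hb hab
      simp only [smul_eq_mul, Set.mem_Iio] at hIio
      nlinarith [mul_le_mul_of_nonneg_left hexp ha2.le]
    · show β2 * Real.exp (β3 * (a • x + b • y).2.1) < β1
      have hz2 : (a • x + b • y).2.1 = a * x.2.1 + b * y.2.1 := by simp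
      rw [hz2]
      have hexp : Real.exp (β3 * (a * x.2.1 + b * y.2.1)) ≤
          a * Real.exp (β3 * x.2.1) + b * Real.exp (β3 * y.2.1) := by
        have harg : β3 * (a * x.2.1 + b * y.2.1) = a • (β3 * x.2.1) + b • (β3 * y.2.1) := by
          simp only [smul_eq_mul]; ring
        rw [harg]
        simpa [smul_eq_mul] using
          convexOn_exp.2 (Set.mem_univ (β3 * x.2.1)) (Set.mem_univ (β3 * y.2.1)) ha hb hab
      have hIio : a • (β2 * Real.exp (β3 * x.2.1)) + b • (β2 * Real.exp (β3 * y.2.1)) ∈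
          Set.Iio β1 := (convex_Iio β1) hx2 hy2 ha hb hab
      simp only [smul_eq_mul, Set.mem_Iio] at hIio
      nlinarith [mul_le_mul_of_nonneg_left hexp hb2.le]
    · show 0 < (a • x + b • y).2.2
      have hz3 : (a • x + b • y).2.2 = a * x.2.2 + b * y.2.2 := by simp
      rw [hz3]
      have := (convex_Ioi (0:ℝ)) hx3 hy3 ha hb hab
      simpa [smul_eq_mul] using this
  have gc_eq : ∀ z ∈ S, f z =
      M * z.2.2 - (M / (2 * (1 + γ) ^ 2)) *
        (z.2.2 ^ 3 / ((α1 - α2 * Real.exp (α3 * z.1)) * (β1 - β2 * Real.exp (β3 * z.2.1)))) -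
      N * c1 * (1 - z.1) - N * c2 * (1 - z.2.1) := by
    intro z hz
    have h1 : (0:ℝ) < α1 - α2 * Real.exp (α3 * z.1) := by have := hz.1; linarith
    have h2 : (0:ℝ) < β1 - β2 * Real.exp (β3 * z.2.1) := by have := hz.2.1; linarith
    show GcFun M N c1 c2 α1 α2 α3 β1 β2 β3 γ z = _
    unfold GcFun
    field_simp
  have hC : 0 < M / (2 * (1 + γ) ^ 2) := by positivity
  have hconc : StrictConcaveOn ℝ S f := by
    refine ⟨hconv, ?_⟩
    intro x hx y hy hxy a b ha hb hab
    obtain ⟨hx1, hx2, hx3⟩ := hx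
    obtain ⟨hy1, hy2, hy3⟩ := hy
    have hu1 : (0:ℝ) < α1 - α2 * Real.exp (α3 * x.1) := by linarith
    have hu2 : (0:ℝ) < β1 - β2 * Real.exp (β3 * x.2.1) := by linarith
    have hv1 : (0:ℝ) < α1 - α2 * Real.exp (α3 * y.1) := by linarith
    have hv2 : (0:ℝ) < β1 - β2 * Real.exp (β3 * y.2.1) := by linarith
    have hzS : a • x + b • y ∈ S :=
      hconv ⟨hx1, hx2, hx3⟩ ⟨hy1, hy2, hy3⟩ ha.le hb.le hab
    have hz1 : (a • x + b • y).1 = a * x.1 + b * y.1 := by simp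
    have hz2 : (a • x + b • y).2.1 = a * x.2.1 + b * y.2.1 := by simp
    have hz3 : (a • x + b • y).2.2 = a * x.2.2 + b * y.2.2 := by simp
    -- concavity bounds for u1, u2 at the combination point
    have hexp1 : Real.exp (α3 * (a * x.1 + b * y.1)) ≤
        a * Real.exp (α3 * x.1) + b * Real.exp (α3 * y.1) := by
      have harg : α3 * (a * x.1 + b * y.1) = a • (α3 * x.1) + b • (α3 * y.1) := by
        simp only [smul_eq_mul]; ring
      rw [harg]
      simpa [smul_eq_mul] using
        convexOn_exp.2 (Set.mem_univ (α3 * x.1)) (Set.mem_univ (α3 * y.1)) ha.le hb.le hab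
    have hexp2 : Real.exp (β3 * (a * x.2.1 + b * y.2.1)) ≤
        a * Real.exp (β3 * x.2.1) + b * Real.exp (β3 * y.2.1) := by
      have harg : β3 * (a * x.2.1 + b * y.2.1) = a • (β3 * x.2.1) + b • (β3 * y.2.1) := by
        simp only [smul_eq_mul]; ring
      rw [harg]
      simpa [smul_eq_mul] using
        convexOn_exp.2 (Set.mem_univ (β3 * x.2.1)) (Set.mem_univ (β3 * y.2.1)) ha.le hb.le hab
    have hU1 : a * (α1 - α2 * Real.exp (α3 * x.1)) + b * (α1 - α2 * Real.exp (α3 * y.1)) ≤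
        α1 - α2 * Real.exp (α3 * (a * x.1 + b * y.1)) := by
      have hm := mul_le_mul_of_nonneg_left hexp1 ha2.le
      have hcomb : a * (α1 - α2 * Real.exp (α3 * x.1)) + b * (α1 - α2 * Real.exp (α3 * y.1)) =
          α1 - α2 * (a * Real.exp (α3 * x.1) + b * Real.exp (α3 * y.1)) := by
        linear_combination α1 * hab
      rw [hcomb]
      linarith
    have hU2 : a * (β1 - β2 * Real.exp (β3 * x.2.1)) + b * (β1 - β2 * Real.exp (β3 * y.2.1)) ≤
        β1 - β2 * Real.exp (β3 * (a * x.2.1 + b * y.2.1)) := by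
      have hm := mul_le_mul_of_nonneg_left hexp2 hb2.le
      have hcomb : a * (β1 - β2 * Real.exp (β3 * x.2.1)) + b * (β1 - β2 * Real.exp (β3 * y.2.1)) =
          β1 - β2 * (a * Real.exp (β3 * x.2.1) + b * Real.exp (β3 * y.2.1)) := by
        linear_combination β1 * hab
      rw [hcomb]
      linarith
    -- the key strict inequality
    have hcase : ((α1 - α2 * Real.exp (α3 * x.1)) = (α1 - α2 * Real.exp (α3 * y.1)) ∧
        (β1 - β2 * Real.exp (β3 * x.2.1)) = (β1 - β2 * Real.exp (β3 * y.2.1)) ∧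
        (α1 - α2 * Real.exp (α3 * (a * x.1 + b * y.1))) = (α1 - α2 * Real.exp (α3 * x.1)) ∧
        (β1 - β2 * Real.exp (β3 * (a * x.2.1 + b * y.2.1))) = (β1 - β2 * Real.exp (β3 * x.2.1)) ∧
        x.2.2 ≠ y.2.2) ∨
        (a * (α1 - α2 * Real.exp (α3 * x.1)) + b * (α1 - α2 * Real.exp (α3 * y.1)) <
          α1 - α2 * Real.exp (α3 * (a * x.1 + b * y.1)) ∨
        a * (β1 - β2 * Real.exp (β3 * x.2.1)) + b * (β1 - β2 * Real.exp (β3 * y.2.1)) <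
          β1 - β2 * Real.exp (β3 * (a * x.2.1 + b * y.2.1))) := by
      by_cases hc1 : x.1 = y.1 ∧ x.2.1 = y.2.1
      · left
        have hpq : x.2.2 ≠ y.2.2 := by
          intro h
          exact hxy (Prod.ext hc1.1 (Prod.ext hc1.2 h))
        have e1 : a * x.1 + b * y.1 = x.1 := by
          rw [← hc1.1]; linear_combination x.1 * hab
        have e2 : a * x.2.1 + b * y.2.1 = x.2.1 := by
          rw [← hc1.2]; linear_combination x.2.1 * hab
        refine ⟨by rw [hc1.1], by rw [hc1.2], by rw [e1], by rw [e2], hpq⟩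
      · right
        rw [not_and_or] at hc1
        rcases hc1 with hne | hne
        · left
          have hargne : α3 * x.1 ≠ α3 * y.1 := fun h => hne (mul_left_cancel₀ ha3.ne' h)
          have hstrict : Real.exp (α3 * (a * x.1 + b * y.1)) <
              a * Real.exp (α3 * x.1) + b * Real.exp (α3 * y.1) := by
            have harg : α3 * (a * x.1 + b * y.1) = a • (α3 * x.1) + b • (α3 * y.1) := by
              simp only [smul_eq_mul]; ring
            rw [harg]
            simpa [smul_eq_mul] using
              strictConvexOn_exp.2 (Set.mem_univ (α3 * x.1)) (Set.mem_univ (α3 * y.1))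
                hargne ha hb hab
          have hm := mul_lt_mul_of_pos_left hstrict ha2
          have hcomb : a * (α1 - α2 * Real.exp (α3 * x.1)) + b * (α1 - α2 * Real.exp (α3 * y.1)) =
              α1 - α2 * (a * Real.exp (α3 * x.1) + b * Real.exp (α3 * y.1)) := by
            linear_combination α1 * hab
          rw [hcomb]
          linarith
        · right
          have hargne : β3 * x.2.1 ≠ β3 * y.2.1 := fun h => hne (mul_left_cancel₀ hb3.ne' h)
          have hstrict : Real.exp (β3 * (a * x.2.1 + b * y.2.1)) <
              a * Real.exp (β3 * x.2.1) + b * Real.exp (β3 * y.2.1) := by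
            have harg : β3 * (a * x.2.1 + b * y.2.1) = a • (β3 * x.2.1) + b • (β3 * y.2.1) := by
              simp only [smul_eq_mul]; ring
            rw [harg]
            simpa [smul_eq_mul] using
              strictConvexOn_exp.2 (Set.mem_univ (β3 * x.2.1)) (Set.mem_univ (β3 * y.2.1))
                hargne ha hb hab
          have hm := mul_lt_mul_of_pos_left hstrict hb2
          have hcomb : a * (β1 - β2 * Real.exp (β3 * x.2.1)) + b * (β1 - β2 * Real.exp (β3 * y.2.1)) =
              β1 - β2 * (a * Real.exp (β3 * x.2.1) + b * Real.exp (β3 * y.2.1)) := by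
            linear_combination β1 * hab
          rw [hcomb]
          linarith
    have key := strict_core hx3 hy3 hu1 hu2 hv1 hv2 ha hb hab hU1 hU2 hcase
    -- now rewrite the goal
    have goalrw1 := gc_eq x ⟨hx1, hx2, hx3⟩
    have goalrw2 := gc_eq y ⟨hy1, hy2, hy3⟩
    have goalrw3 := gc_eq _ hzS
    rw [hz1, hz2, hz3] at goalrw3
    simp only [smul_eq_mul]
    rw [goalrw1, goalrw2, goalrw3]
    have hmul := mul_lt_mul_of_pos_left key hC
    have eL : a * (M * x.2.2 - (M / (2 * (1 + γ) ^ 2)) *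
          (x.2.2 ^ 3 / ((α1 - α2 * Real.exp (α3 * x.1)) * (β1 - β2 * Real.exp (β3 * x.2.1)))) -
          N * c1 * (1 - x.1) - N * c2 * (1 - x.2.1)) +
        b * (M * y.2.2 - (M / (2 * (1 + γ) ^ 2)) *
          (y.2.2 ^ 3 / ((α1 - α2 * Real.exp (α3 * y.1)) * (β1 - β2 * Real.exp (β3 * y.2.1)))) -
          N * c1 * (1 - y.1) - N * c2 * (1 - y.2.1)) =
        M * (a * x.2.2 + b * y.2.2) - (M / (2 * (1 + γ) ^ 2)) *
          (a * (x.2.2 ^ 3 / ((α1 - α2 * Real.exp (α3 * x.1)) *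
              (β1 - β2 * Real.exp (β3 * x.2.1)))) +
           b * (y.2.2 ^ 3 / ((α1 - α2 * Real.exp (α3 * y.1)) *
              (β1 - β2 * Real.exp (β3 * y.2.1))))) -
          N * c1 * (1 - (a * x.1 + b * y.1)) - N * c2 * (1 - (a * x.2.1 + b * y.2.1)) := by
      linear_combination (-(N * c1) - N * c2) * hab
    rw [eL]
    linarith [hmul]
  refine ⟨hconc, ?_⟩
  -- second part: a critical point is the unique global maximizer
  intro x hx hcrit y hy hyx
  have hdiff : DifferentiableAt ℝ f x := by
    have hw1 : (0:ℝ) < α1 - α2 * Real.exp (α3 * x.1) := by have := hx.1; linarith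
    have hw2 : (0:ℝ) < β1 - β2 * Real.exp (β3 * x.2.1) := by have := hx.2.1; linarith
    have hden : 2 * (1 + γ) ^ 2 * (α1 - α2 * Real.exp (α3 * x.1)) *
        (β1 - β2 * Real.exp (β3 * x.2.1)) ≠ 0 := by positivity
    have dden : DifferentiableAt ℝ (fun z : ℝ × ℝ × ℝ =>
        2 * (1 + γ) ^ 2 * (α1 - α2 * Real.exp (α3 * z.1)) *
        (β1 - β2 * Real.exp (β3 * z.2.1))) x := by fun_prop
    have dnum : DifferentiableAt ℝ (fun z : ℝ × ℝ × ℝ => z.2.2 ^ 2) x := by fun_prop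
    have dfrac : DifferentiableAt ℝ (fun z : ℝ × ℝ × ℝ => z.2.2 ^ 2 /
        (2 * (1 + γ) ^ 2 * (α1 - α2 * Real.exp (α3 * z.1)) *
          (β1 - β2 * Real.exp (β3 * z.2.1)))) x := by
      simp only [div_eq_mul_inv]
      exact dnum.mul (dden.inv hden)
    have dmain : DifferentiableAt ℝ (fun z : ℝ × ℝ × ℝ =>
        M * z.2.2 * (1 - z.2.2 ^ 2 /
          (2 * (1 + γ) ^ 2 * (α1 - α2 * Real.exp (α3 * z.1)) *
            (β1 - β2 * Real.exp (β3 * z.2.1)))) -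
        N * c1 * (1 - z.1) - N * c2 * (1 - z.2.1)) x := by
      apply DifferentiableAt.sub
      apply DifferentiableAt.sub
      · exact ((by fun_prop : DifferentiableAt ℝ (fun z : ℝ × ℝ × ℝ => M * z.2.2) x)).mul
          ((differentiableAt_const (1:ℝ)).sub dfrac)
      · fun_prop
      · fun_prop
    exact dmain
  have hfd : HasFDerivAt f (0 : (ℝ × ℝ × ℝ) →L[ℝ] ℝ) x := by
    have h := hdiff.hasFDerivAt
    rwa [hcrit] at h
  have claim1 : ∀ z ∈ S, f z ≤ f x := by
    intro z hz
    rcases eq_or_ne z x with rfl | hzx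
    · exact le_refl _
    have hcv : HasDerivAt (fun t : ℝ => x + t • (z - x)) (z - x) 0 := by
      simpa using ((hasDerivAt_id (0:ℝ)).smul_const (z - x)).const_add x
    have hg : HasDerivAt (fun t : ℝ => f (x + t • (z - x))) 0 0 := by
      have hfd' : HasFDerivAt f (0 : (ℝ × ℝ × ℝ) →L[ℝ] ℝ) (x + (0:ℝ) • (z - x)) := by
        simpa using hfd
      have h := hfd'.comp_hasDerivAt 0 hcv
      simp only [ContinuousLinearMap.zero_apply] at h
      exact h
    have hmem : ∀ t : ℝ, x + t • (z - x) = (1 - t) • x + t • z := by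
      intro t
      rw [sub_smul, one_smul, smul_sub]
      abel
    have hineq : ∀ᶠ t in nhdsWithin (0:ℝ) (Set.Ioi 0),
        f z - f x ≤ (f (x + t • (z - x)) - f x) / t := by
      filter_upwards [Ioo_mem_nhdsGT_of_mem
        (by norm_num : (0:ℝ) ∈ Set.Ico (0:ℝ) 1)] with t ht
      have hcc := hconc.2 hx hz (Ne.symm hzx) (by linarith [ht.2] : (0:ℝ) < 1 - t) ht.1
        (by ring)
      rw [← hmem t] at hcc
      simp only [smul_eq_mul] at hcc
      rw [le_div_iff₀ ht.1]
      nlinarith [hcc]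
    have htends : Filter.Tendsto (fun t : ℝ => (f (x + t • (z - x)) - f x) / t)
        (nhdsWithin (0:ℝ) (Set.Ioi 0)) (nhds 0) := by
      have hslope := hasDerivAt_iff_tendsto_slope.mp hg
      have heq : (fun t : ℝ => (f (x + t • (z - x)) - f x) / t) =
          slope (fun t : ℝ => f (x + t • (z - x))) 0 := by
        funext t
        rw [slope_def_field]
        simp [div_eq_mul_inv]
      rw [heq]
      exact hslope.mono_left (nhdsWithin_mono _ (fun t ht => Set.mem_compl_singleton_iff.mpr
        (ne_of_gt ht)))
    linarith [ge_of_tendsto htends hineq]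
  have hmS : (1/2 : ℝ) • x + (1/2 : ℝ) • y ∈ S :=
    hconv hx hy (by norm_num) (by norm_num) (by norm_num)
  have hmlt := hconc.2 hx hy (Ne.symm hyx) one_half_pos one_half_pos (by norm_num)
  have hm := claim1 _ hmS
  simp only [smul_eq_mul] at hmlt
  linarith
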